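/- For every graph F containing a cycle and every graph G satisfying G →nni (F)_2, we have m₂(G) > m₂(F). -/

import Mathlib

open SimpleGraph

/-- `G →nni (F)_r` : every `r`-colouring of the edges of `G` yields a monochromatic
(not necessarily induced) subgraph of `G` isomorphic to `F`. -/
def ArrowNNI {V α : Type*} (G : SimpleGraph V) (F : SimpleGraph α) (r : ℕ) : Prop :=
  ∀ c : Sym2 V → Fin r, ∃ f : F →g G, Function.Injective f ∧
    ∃ k : Fin r, ∀ x y, F.Adj x y → c s(f x, f y) = k

/-- `d2v v e` : the `2`-density of a graph with `v` vertices and `e ≥ 1` edges. -/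
noncomputable def d2v (v e : ℕ) : ℝ :=
  if 3 ≤ v then ((e : ℝ) - 1) / ((v : ℝ) - 2) else 1

/-- The maximum `2`-density `m₂` of a graph: the maximum of the `2`-densities of its
subgraphs with at least one edge. -/
noncomputable def m2 {V : Type*} (G : SimpleGraph V) : ℝ :=
  sSup {x : ℝ | ∃ H : G.Subgraph, H.edgeSet.Nonempty ∧
    x = d2v H.verts.ncard H.edgeSet.ncard}

/-!
Suppose `m₂(G) ≤ m := m₂(F)`. A cycle gives `m > 1`, so a densest subgraph `F₀ ⊆ F` with
as few vertices as possible is strictly 2-balanced with `d₂(F₀) = m` and has at least three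
edges.
Subgraphs are measured by the excess `e - 1 - m (v - 2)`, which is modular under `⊔`/`⊓` and
nonpositive on every subgraph of `G` with an edge. Every copy of `F₀` in `G` has excess zero, so
a union of excess zero and a copy sharing some but not all of its edges meet in exactly one edge,
and their union has excess zero again. Growing a maximal such union inside any family of copies
exhibits a copy with an edge `p` lying in no copy of the family with a different edge set.
Removing that copy, colouring the rest inductively and giving `p` the colour opposite to another
edge of its copy yields a 2-colouring of `G` without monochromatic copy of `F₀`, hence of `F`.
-/

open Set

namespace SimpleGraph

instance {α β : Type*} {A : SimpleGraph α} {B : SimpleGraph β} [Finite α] [Finite β] :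
    Finite (Copy A B) :=
  Finite.of_injective _ DFunLike.coe_injective

namespace Subgraph

variable {V W : Type*} {G : SimpleGraph V} {G' : SimpleGraph W}

theorem ncard_edgeSet_le_choose_two [Finite V] (H : G.Subgraph) :
    H.edgeSet.ncard ≤ H.verts.ncard.choose 2 := by
  classical
  have := Fintype.ofFinite H.verts
  rw [← H.image_coe_edgeSet_coe,
    ncard_image_of_injective _ (Sym2.map.injective Subtype.val_injective),
    ← Nat.card_coe_set_eq H.verts, Nat.card_eq_fintype_card, ← H.coe.coe_edgeFinset,
    ncard_coe_finset]
  exact H.coe.card_edgeFinset_le_card_choose_two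

theorem two_le_ncard_verts [Finite V] {H : G.Subgraph} (hH : H.edgeSet.Nonempty) :
    2 ≤ H.verts.ncard := by
  by_contra! h
  have := H.ncard_edgeSet_le_choose_two
  rw [Nat.choose_eq_zero_of_lt h, nonpos_iff_eq_zero, ncard_eq_zero] at this
  exact hH.ne_empty this

theorem ncard_edgeSet_le_one [Finite V] {H : G.Subgraph} (hH : H.verts.ncard ≤ 2) :
    H.edgeSet.ncard ≤ 1 :=
  H.ncard_edgeSet_le_choose_two.trans ((Nat.choose_le_choose 2 hH).trans_eq (Nat.choose_self 2))

theorem ncard_edgeSet_map {f : G →g G'} (hf : Function.Injective f) (H : G.Subgraph) :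
    (H.map f).edgeSet.ncard = H.edgeSet.ncard := by
  rw [edgeSet_map, ncard_image_of_injective _ (Sym2.map.injective hf)]

theorem ncard_verts_map {f : G →g G'} (hf : Function.Injective f) (H : G.Subgraph) :
    (H.map f).verts.ncard = H.verts.ncard := by
  rw [map_verts, ncard_image_of_injective _ hf]

theorem map_inf_comap_of_le {f : G →g G'} {H : G.Subgraph} {C : G'.Subgraph}
    (hC : C ≤ H.map f) :
    (H ⊓ C.comap f).map f = C := by
  ext u v
  · simp only [map_verts, verts_inf, comap_verts, image_inter_preimage, mem_inter_iff]
    exact and_iff_right_of_imp (hC.1 ·)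
  · simp only [map_adj, inf_adj, comap_adj, Relation.Map]
    constructor
    · rintro ⟨a, b, ⟨-, -, hab⟩, rfl, rfl⟩
      exact hab
    · intro huv
      obtain ⟨a, b, hab, rfl, rfl⟩ := hC.2 huv
      exact ⟨a, b, ⟨hab, H.adj_sub hab, huv⟩, rfl, rfl⟩

noncomputable def excess (m : ℝ) (H : G.Subgraph) : ℝ :=
  H.edgeSet.ncard - 1 - m * (H.verts.ncard - 2)

theorem excess_map {f : G →g G'} (hf : Function.Injective f) (m : ℝ) (H : G.Subgraph) :
    (H.map f).excess m = H.excess m := by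
  rw [excess, excess, ncard_edgeSet_map hf, ncard_verts_map hf]

theorem excess_sup_add_excess_inf [Finite V] (m : ℝ) (A B : G.Subgraph) :
    (A ⊔ B).excess m + (A ⊓ B).excess m = A.excess m + B.excess m := by
  have hv : ((A ⊔ B).verts.ncard : ℝ) + (A ⊓ B).verts.ncard =
      A.verts.ncard + B.verts.ncard := by
    rw [verts_sup, verts_inf]
    exact_mod_cast ncard_union_add_ncard_inter _ _
  have he : ((A ⊔ B).edgeSet.ncard : ℝ) + (A ⊓ B).edgeSet.ncard =
      A.edgeSet.ncard + B.edgeSet.ncard := by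
    rw [edgeSet_sup, edgeSet_inf]
    exact_mod_cast ncard_union_add_ncard_inter _ _
  simp only [excess]
  linear_combination he - m * hv

theorem excess_eq_d2v_sub_mul {H : G.Subgraph} (hv : 3 ≤ H.verts.ncard) (m : ℝ) :
    H.excess m = (d2v H.verts.ncard H.edgeSet.ncard - m) * (H.verts.ncard - 2) := by
  have : (3 : ℝ) ≤ H.verts.ncard := by exact_mod_cast hv
  rw [excess, d2v, if_pos hv, sub_mul, div_mul_cancel₀ _ (by linarith)]

theorem excess_eq_zero_iff {H : G.Subgraph} (hv : 3 ≤ H.verts.ncard) {m : ℝ} :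
    H.excess m = 0 ↔ d2v H.verts.ncard H.edgeSet.ncard = m := by
  have : (3 : ℝ) ≤ H.verts.ncard := by exact_mod_cast hv
  rw [excess_eq_d2v_sub_mul hv, mul_eq_zero, sub_eq_zero, or_iff_left (by linarith)]

theorem excess_nonpos_of_d2v_le [Finite V] {H : G.Subgraph} (hH : H.edgeSet.Nonempty) {m : ℝ}
    (h : d2v H.verts.ncard H.edgeSet.ncard ≤ m) : H.excess m ≤ 0 := by
  by_cases hv : 3 ≤ H.verts.ncard
  · have : (3 : ℝ) ≤ H.verts.ncard := by exact_mod_cast hv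
    rw [excess_eq_d2v_sub_mul hv]
    exact mul_nonpos_of_nonpos_of_nonneg (by linarith) (by linarith)
  · have hv2 : H.verts.ncard = 2 := by have := two_le_ncard_verts hH; omega
    have he1 : H.edgeSet.ncard = 1 := by
      have := ncard_edgeSet_le_one hv2.le
      have := (ncard_pos H.edgeSet.toFinite).2 hH
      omega
    simp [excess, hv2, he1]

/-- `B` is strictly 2-balanced with `d₂(B) = m`, phrased through the excess. -/
structure IsStrictlyBalancedAt (m : ℝ) (B : G.Subgraph) : Prop where
  excess_eq_zero : B.excess m = 0
  excess_neg : ∀ C ≤ B, 2 ≤ C.edgeSet.ncard → C.edgeSet.ncard < B.edgeSet.ncard →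
    C.excess m < 0

theorem IsStrictlyBalancedAt.map {m : ℝ} {B : G.Subgraph} (hB : B.IsStrictlyBalancedAt m)
    {f : G →g G'} (hf : Function.Injective f) : (B.map f).IsStrictlyBalancedAt m where
  excess_eq_zero := (excess_map hf m B).trans hB.excess_eq_zero
  excess_neg C hC h2 hlt := by
    have hD := map_inf_comap_of_le hC
    rw [← hD, ncard_edgeSet_map hf] at h2 hlt
    rw [ncard_edgeSet_map hf] at hlt
    rw [← hD, excess_map hf]
    exact hB.excess_neg _ inf_le_left h2 hlt

end Subgraph

section Blocks

open Subgraph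

variable {V κ : Type*} [Finite V] {G : SimpleGraph V} {m : ℝ}

theorem excess_sup_eq_zero_and_excess_inf_eq_zero
    (hG : ∀ C : G.Subgraph, C.edgeSet.Nonempty → C.excess m ≤ 0) {A B : G.Subgraph}
    (hA : A.excess m = 0) (hB : B.excess m = 0) (hAB : (A.edgeSet ∩ B.edgeSet).Nonempty) :
    (A ⊔ B).excess m = 0 ∧ (A ⊓ B).excess m = 0 := by
  have hsup := hG (A ⊔ B) (hAB.mono <| by
    rw [Subgraph.edgeSet_sup]
    exact inter_subset_left.trans subset_union_left)
  have hinf := hG (A ⊓ B) (by rwa [Subgraph.edgeSet_inf])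
  have := excess_sup_add_excess_inf m A B
  constructor <;> linarith

theorem ncard_inter_edgeSet_le_one
    (hG : ∀ C : G.Subgraph, C.edgeSet.Nonempty → C.excess m ≤ 0) {A B : G.Subgraph}
    (hB : B.IsStrictlyBalancedAt m) (hA : A.excess m = 0) (hBA : ¬ B.edgeSet ⊆ A.edgeSet) :
    (A.edgeSet ∩ B.edgeSet).ncard ≤ 1 := by
  by_contra! h2
  have hinf := (excess_sup_eq_zero_and_excess_inf_eq_zero hG hA hB.excess_eq_zero
    (nonempty_of_ncard_ne_zero (by omega))).2
  have hlt : (A ⊓ B).edgeSet.ncard < B.edgeSet.ncard := by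
    rw [Subgraph.edgeSet_inf]
    exact ncard_lt_ncard ⟨inter_subset_right, fun h => hBA (h.trans inter_subset_left)⟩
  have := hB.excess_neg _ inf_le_right (by rwa [Subgraph.edgeSet_inf]) hlt
  linarith

theorem edgeSet_eq_of_subset
    (hG : ∀ C : G.Subgraph, C.edgeSet.Nonempty → C.excess m ≤ 0) {A B : G.Subgraph}
    (hB : B.IsStrictlyBalancedAt m) (hA : A.excess m = 0) (hA2 : 2 ≤ A.edgeSet.ncard)
    (hAB : A.edgeSet ⊆ B.edgeSet) : A.edgeSet = B.edgeSet := by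
  by_contra hne
  have := ncard_inter_edgeSet_le_one hG hB hA fun h => hne (hAB.antisymm h)
  rw [inter_eq_left.2 hAB] at this
  omega

def HasPrivateBlock (m : ℝ) (B : κ → G.Subgraph) (s : Finset κ) (U : G.Subgraph) : Prop :=
  U.excess m = 0 ∧ ∃ k ∈ s, ∃ p ∈ (B k).edgeSet, (B k).edgeSet ⊆ U.edgeSet ∧
    ∀ j, p ∈ (B j).edgeSet → (B j).edgeSet ⊆ U.edgeSet → (B j).edgeSet = (B k).edgeSet

variable {B : κ → G.Subgraph} {s : Finset κ} {k : κ}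

theorem hasPrivateBlock_of_mem
    (hG : ∀ C : G.Subgraph, C.edgeSet.Nonempty → C.excess m ≤ 0)
    (hB : ∀ j, (B j).IsStrictlyBalancedAt m) (hB3 : ∀ j, 3 ≤ (B j).edgeSet.ncard)
    (hk : k ∈ s) :
    HasPrivateBlock m B s (B k) := by
  obtain ⟨p, hp⟩ : (B k).edgeSet.Nonempty :=
    nonempty_of_ncard_ne_zero (by have := hB3 k; omega)
  exact ⟨(hB k).excess_eq_zero, k, hk, p, hp, subset_rfl, fun j _ hjk =>
    edgeSet_eq_of_subset hG (hB k) (hB j).excess_eq_zero (by have := hB3 j; omega) hjk⟩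

/-- A new edge `p` of the glued block is private: a block through `p` not contained in the new
block meets it in `p` only, hence meets the old union in at least two edges but not in all. -/
theorem HasPrivateBlock.sup
    (hG : ∀ C : G.Subgraph, C.edgeSet.Nonempty → C.excess m ≤ 0)
    (hB : ∀ j, (B j).IsStrictlyBalancedAt m) (hB3 : ∀ j, 3 ≤ (B j).edgeSet.ncard)
    {U : G.Subgraph} (hU : HasPrivateBlock m B s U) (hk : k ∈ s)
    (hmeet : (U.edgeSet ∩ (B k).edgeSet).Nonempty) (hnew : ¬ (B k).edgeSet ⊆ U.edgeSet) :
    HasPrivateBlock m B s (U ⊔ B k) := by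
  obtain ⟨hU0, -⟩ := hU
  obtain ⟨p, hpk, hpU⟩ := not_subset.1 hnew
  refine ⟨(excess_sup_eq_zero_and_excess_inf_eq_zero hG hU0 (hB k).excess_eq_zero hmeet).1,
    k, hk, p, hpk, by rw [Subgraph.edgeSet_sup]; exact subset_union_right, fun j hpj hjU => ?_⟩
  rw [Subgraph.edgeSet_sup] at hjU
  refine edgeSet_eq_of_subset hG (hB k) (hB j).excess_eq_zero (by have := hB3 j; omega)
    fun e he => ?_
  by_contra hek
  have hjk := ncard_inter_edgeSet_le_one hG (hB j) (hB k).excess_eq_zero fun h => hek (h he)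
  have hrest : (B j).edgeSet \ {p} ⊆ U.edgeSet ∩ (B j).edgeSet := by
    rintro x ⟨hx, hxp⟩
    refine ⟨(hjU hx).resolve_right fun hxk => hxp ?_, hx⟩
    exact ((ncard_le_one (toFinite _)).1 hjk) x ⟨hxk, hx⟩ p ⟨hpk, hpj⟩
  have hjU' := ncard_inter_edgeSet_le_one hG (hB j) hU0 fun h => hpU (h hpj)
  have := ncard_le_ncard hrest
  rw [ncard_sdiff_singleton_of_mem hpj] at this
  have := hB3 j
  omega

theorem exists_private_edge
    (hG : ∀ C : G.Subgraph, C.edgeSet.Nonempty → C.excess m ≤ 0)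
    (hB : ∀ j, (B j).IsStrictlyBalancedAt m) (hB3 : ∀ j, 3 ≤ (B j).edgeSet.ncard)
    (hs : s.Nonempty) :
    ∃ k ∈ s, ∃ p ∈ (B k).edgeSet,
      ∀ j ∈ s, p ∈ (B j).edgeSet → (B j).edgeSet = (B k).edgeSet := by
  obtain ⟨k₀, hk₀⟩ := hs
  obtain ⟨U, hU, hmax⟩ := exists_max_image {U | HasPrivateBlock m B s U}
    (fun U => U.edgeSet.ncard) (toFinite _) ⟨B k₀, hasPrivateBlock_of_mem hG hB hB3 hk₀⟩
  obtain ⟨k, hk, p, hp, hkU, hpriv⟩ := hU.2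
  refine ⟨k, hk, p, hp, fun j hj hpj => hpriv j hpj ?_⟩
  by_contra hjU
  have hle := hmax _ (hU.sup hG hB hB3 hj ⟨p, hkU hp, hpj⟩ hjU)
  have hlt : U.edgeSet.ncard < (U ⊔ B j).edgeSet.ncard := by
    rw [Subgraph.edgeSet_sup]
    exact ncard_lt_ncard (left_lt_sup.2 hjU)
  omega

end Blocks

theorem exists_fin_two_colouring_of_exists_private_mem {ι κ : Type*} [Finite κ]
    (X : κ → Set ι)
    (hX : ∀ k, (X k).Nontrivial)
    (hpriv : ∀ s : Finset κ, s.Nonempty →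
      ∃ k ∈ s, ∃ p ∈ X k, ∀ j ∈ s, p ∈ X j → X j = X k) :
    ∃ c : ι → Fin 2, ∀ k, ∃ p ∈ X k, ∃ q ∈ X k, c p ≠ c q := by
  classical
  suffices h : ∀ s : Finset κ,
      ∃ c : ι → Fin 2, ∀ k ∈ s, ∃ p ∈ X k, ∃ q ∈ X k, c p ≠ c q by
    cases nonempty_fintype κ
    obtain ⟨c, hc⟩ := h Finset.univ
    exact ⟨c, fun k => hc k (Finset.mem_univ k)⟩
  intro s
  induction s using Finset.strongInduction with
  | H s ih =>
    obtain rfl | hs := s.eq_empty_or_nonempty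
    · exact ⟨0, by simp⟩
    obtain ⟨k, hk, p, hpk, hp⟩ := hpriv s hs
    obtain ⟨c, hc⟩ := ih _ (Finset.erase_ssubset hk)
    obtain ⟨q, hqk, hqp⟩ := (hX k).exists_ne p
    refine ⟨Function.update c p (c q + 1), fun j hj => ?_⟩
    by_cases hpj : p ∈ X j
    · refine ⟨p, hpj, q, hp j hj hpj ▸ hqk, ?_⟩
      rw [Function.update_self, Function.update_of_ne hqp]
      exact (by decide : ∀ x : Fin 2, x + 1 ≠ x) (c q)
    · obtain ⟨p', hp', q', hq', hne⟩ :=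
        hc j (Finset.mem_erase.2 ⟨fun h => hpj (h ▸ hpk), hj⟩)
      refine ⟨p', hp', q', hq', ?_⟩
      rwa [Function.update_of_ne (ne_of_mem_of_not_mem hp' hpj),
        Function.update_of_ne (ne_of_mem_of_not_mem hq' hpj)]

section MaxTwoDensity

open Subgraph

variable {V : Type*} [Finite V] {G : SimpleGraph V}

theorem finite_setOf_d2v : {x : ℝ | ∃ H : G.Subgraph, H.edgeSet.Nonempty ∧
    x = d2v H.verts.ncard H.edgeSet.ncard}.Finite :=
  (finite_range fun H : G.Subgraph => d2v H.verts.ncard H.edgeSet.ncard).subset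
    fun _ ⟨H, _, hx⟩ => ⟨H, hx.symm⟩

theorem d2v_le_m2 {H : G.Subgraph} (hH : H.edgeSet.Nonempty) :
    d2v H.verts.ncard H.edgeSet.ncard ≤ m2 G :=
  le_csSup finite_setOf_d2v.bddAbove ⟨H, hH, rfl⟩

theorem excess_nonpos_of_m2_le {m : ℝ} (h : m2 G ≤ m) (C : G.Subgraph)
    (hC : C.edgeSet.Nonempty) : C.excess m ≤ 0 :=
  excess_nonpos_of_d2v_le hC ((d2v_le_m2 hC).trans h)

theorem one_lt_m2_of_not_isAcyclic (h : ¬ G.IsAcyclic) : 1 < m2 G := by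
  classical
  obtain ⟨v, c, hc⟩ : ∃ v, ∃ c : G.Walk v v, c.IsCycle := by simpa [IsAcyclic] using h
  have he : c.toSubgraph.edgeSet.ncard = c.length := by
    rw [Walk.edgeSet_toSubgraph, ← c.length_edges, ← List.toFinset_card_of_nodup
      hc.edges_nodup, ← ncard_coe_finset, List.coe_toFinset]
    rfl
  -- the first vertex of a closed walk reappears at its end
  have hv : c.toSubgraph.verts.ncard ≤ c.length := by
    have : c.toSubgraph.verts = {w | w ∈ c.support.tail} := by
      rw [Walk.verts_toSubgraph]
      ext w
      change w ∈ c.support ↔ w ∈ c.support.tail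
      rw [← c.cons_tail_support, List.mem_cons]
      exact or_iff_right_of_imp fun hw => hw ▸ Walk.end_mem_tail_support hc.not_nil
    rw [this, ← List.coe_toFinset, ncard_coe_finset]
    exact (List.toFinset_card_le _).trans (by simp)
  have hv3 : 3 ≤ c.toSubgraph.verts.ncard := by
    by_contra! h2
    have := ncard_edgeSet_le_one (H := c.toSubgraph) (by omega)
    have := hc.three_le_length
    omega
  have hne : c.toSubgraph.edgeSet.Nonempty :=
    nonempty_of_ncard_ne_zero (by have := hc.three_le_length; omega)
  refine lt_of_lt_of_le ?_ (d2v_le_m2 hne)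
  have hv' : (3 : ℝ) ≤ c.toSubgraph.verts.ncard := by exact_mod_cast hv3
  have hve : (c.toSubgraph.verts.ncard : ℝ) ≤ c.toSubgraph.edgeSet.ncard := by
    exact_mod_cast he ▸ hv
  rw [d2v, if_pos hv3, one_lt_div (by linarith)]
  linarith

theorem exists_d2v_eq_m2 (h : m2 G ≠ 0) :
    ∃ H : G.Subgraph, H.edgeSet.Nonempty ∧ d2v H.verts.ncard H.edgeSet.ncard = m2 G := by
  have hne : {x : ℝ | ∃ H : G.Subgraph, H.edgeSet.Nonempty ∧
      x = d2v H.verts.ncard H.edgeSet.ncard}.Nonempty :=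
    nonempty_iff_ne_empty.2 fun h0 => h (by rw [m2, h0, Real.sSup_empty])
  obtain ⟨H, hH, hHm⟩ := hne.csSup_mem finite_setOf_d2v
  exact ⟨H, hH, hHm.symm⟩

theorem exists_isStrictlyBalancedAt_m2 (h : 1 < m2 G) :
    ∃ F₀ : G.Subgraph, F₀.IsStrictlyBalancedAt (m2 G) ∧ 3 ≤ F₀.edgeSet.ncard := by
  obtain ⟨F₀, ⟨hF₀, hF₀m⟩, hmin⟩ := exists_min_image
    {H : G.Subgraph | H.edgeSet.Nonempty ∧ d2v H.verts.ncard H.edgeSet.ncard = m2 G}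
    (fun H => H.verts.ncard) (toFinite _) (exists_d2v_eq_m2 (one_pos.trans h).ne')
  have hv3 : 3 ≤ F₀.verts.ncard := by
    by_contra hv
    rw [d2v, if_neg hv] at hF₀m
    linarith
  have h0 : F₀.excess (m2 G) = 0 := (excess_eq_zero_iff hv3).2 hF₀m
  refine ⟨F₀, ⟨h0, fun C hC h2 hlt => ?_⟩, ?_⟩
  · have hCv : 3 ≤ C.verts.ncard := by
      by_contra! hv
      have := ncard_edgeSet_le_one (H := C) (by omega)
      omega
    have hCne : C.edgeSet.Nonempty := nonempty_of_ncard_ne_zero (by omega)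
    refine (excess_nonpos_of_m2_le le_rfl C hCne).lt_of_ne fun hC0 => ?_
    have hCv' : C.verts.ncard = F₀.verts.ncard :=
      (ncard_le_ncard hC.1).antisymm (hmin C ⟨hCne, (excess_eq_zero_iff hCv).1 hC0⟩)
    have : (C.edgeSet.ncard : ℝ) = F₀.edgeSet.ncard := by
      simp only [excess, hCv'] at hC0 h0
      linarith
    exact hlt.ne (by exact_mod_cast this)
  · have hv' : (3 : ℝ) ≤ F₀.verts.ncard := by exact_mod_cast hv3
    have : (2 : ℝ) < F₀.edgeSet.ncard := by
      simp only [excess] at h0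
      nlinarith
    exact_mod_cast this

end MaxTwoDensity

end SimpleGraph

/-- For every graph `F` containing a cycle and every graph `G` with `G →nni (F)_2`
we have `m₂(G) > m₂(F)`. -/
theorem m2_of_ramsey_graph {α β : Type} [Fintype α] [Fintype β]
    (F : SimpleGraph α) (G : SimpleGraph β)
    (hF : ¬ F.IsAcyclic) (hG : ArrowNNI G F 2) :
    m2 F < m2 G := by
  by_contra! hGF
  obtain ⟨F₀, hF₀, hF₀3⟩ := exists_isStrictlyBalancedAt_m2 (one_lt_m2_of_not_isAcyclic hF)
  let B : Copy F G → G.Subgraph := fun f => F₀.map f.toHom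
  have hB3 : ∀ f, 3 ≤ (B f).edgeSet.ncard := fun f => by
    rwa [Subgraph.ncard_edgeSet_map f.injective]
  obtain ⟨c, hc⟩ := exists_fin_two_colouring_of_exists_private_mem (fun f => (B f).edgeSet)
    (fun f => one_lt_ncard_iff_nontrivial.1 (by have := hB3 f; omega))
    fun s hs => exists_private_edge (excess_nonpos_of_m2_le hGF)
      (fun f => hF₀.map f.injective) hB3 hs
  obtain ⟨f, hf, k, hk⟩ := hG c
  obtain ⟨p, hp, q, hq, hpq⟩ := hc (f.toCopy hf)
  have hmono : ∀ e ∈ (B (f.toCopy hf)).edgeSet, c e = k := by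
    intro e he
    rw [Subgraph.edgeSet_map] at he
    obtain ⟨e, he, rfl⟩ := he
    induction e using Sym2.ind with
    | _ x y => exact hk x y (F₀.adj_sub he)
  exact hpq ((hmono p hp).trans (hmono q hq).symm)
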